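/- (Wave equation for Φ1.) In the linearized setting, let α, 𝔣 ∈ I, define Φ0 := r²κ̄²·α, Φ1 := P̄(Φ0), Φ2 := P̄(Φ1), Φ3 := r²κ̄·𝔣, Φ4 := P̄(Φ3), and assume, exactly in B: □Φ0 = (1/r)·(2κκ̄ − 4ρ)·Φ1 + (−(1/2)κκ̄ − 4ρ + 4ρF² + 4Z²)·Φ0 + ρF·((2/r)·Q(Φ3) − 4ρ·Φ3). Then, exactly in B: □Φ1 = (1/r)·(κκ̄ − 2ρ)·Φ2 + (−κκ̄ + 6ρF² + 4Z²)·Φ1 + ((3/2)ρ + ρF²)·r·Φ0 + ρF·((2/r)·Q(Φ4) − Q(Φ3) − 2κκ̄·Φ4 + r·(6ρ + 4ρF²)·Φ3). -/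
import Mathlib


/-!
Algebraic model of the linearized Einstein–Maxwell system around Reissner–Nordström.
`B = A[ε]/(ε²)` is modeled by the dual numbers `DualNumber A` over a commutative
`ℝ`-algebra `A`, and the square-zero ideal `I = ε·B` by `smallIdeal A`.
Equality "modulo O(ε²)" is exact equality in `B`; products of two elements of `I` vanish.
-/

noncomputable section

open scoped DualNumber

/-- The square-zero ideal `I = ε·B` of the dual numbers `B = A[ε]/(ε²)`. -/
def smallIdeal (A : Type*) [CommRing A] : Ideal (DualNumber A) :=
  Ideal.span {(DualNumber.eps : DualNumber A)}

/-- The linearized setting: `ℝ`-linear derivations `e3, e4, eθ` on `B = DualNumber A`,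
background elements `κ, κ̄, ω, ω̄, ρ, ρF, Z, r` (with `r` and `κ̄` invertible, inverses
`ir` and `iκ'`), the background transport relations modulo the square-zero ideal `I`,
and the commutator relations valid on every element of `I`. -/
structure RNSetting (A : Type*) [CommRing A] [Algebra ℝ A] where
  e3 : Derivation ℝ (DualNumber A) (DualNumber A)
  e4 : Derivation ℝ (DualNumber A) (DualNumber A)
  eθ : Derivation ℝ (DualNumber A) (DualNumber A)
  κ : DualNumber A
  κ' : DualNumber A
  ω : DualNumber A
  ω' : DualNumber A
  ρ : DualNumber A
  ρF : DualNumber A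
  Z : DualNumber A
  r : DualNumber A
  ir : DualNumber A
  iκ' : DualNumber A
  hr : r * ir = 1
  hκ' : κ' * iκ' = 1
  pres_e3 : ∀ x ∈ smallIdeal A, e3 x ∈ smallIdeal A
  pres_e4 : ∀ x ∈ smallIdeal A, e4 x ∈ smallIdeal A
  pres_eθ : ∀ x ∈ smallIdeal A, eθ x ∈ smallIdeal A
  he3κ' : e3 κ' - (-((1/2 : ℝ) • (κ' * κ')) - 2 * ω' * κ') ∈ smallIdeal A
  he4κ' : e4 κ' - (-((1/2 : ℝ) • (κ * κ')) + 2 * ω * κ' + 2 * ρ) ∈ smallIdeal A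
  he3κ : e3 κ - (-((1/2 : ℝ) • (κ * κ')) + 2 * ω' * κ + 2 * ρ) ∈ smallIdeal A
  he4κ : e4 κ - (-((1/2 : ℝ) • (κ * κ)) - 2 * ω * κ) ∈ smallIdeal A
  hωω' : e3 ω + e4 ω' - (ρ + ρF ^ 2) ∈ smallIdeal A
  he3ρ : e3 ρ - (-((3/2 : ℝ) • (κ' * ρ)) - κ' * ρF ^ 2) ∈ smallIdeal A
  he4ρ : e4 ρ - (-((3/2 : ℝ) • (κ * ρ)) - κ * ρF ^ 2) ∈ smallIdeal A
  he3ρF : e3 ρF - (-(κ' * ρF)) ∈ smallIdeal A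
  he4ρF : e4 ρF - (-(κ * ρF)) ∈ smallIdeal A
  he3r : e3 r - (1/2 : ℝ) • (r * κ') ∈ smallIdeal A
  he4r : e4 r - (1/2 : ℝ) • (r * κ) ∈ smallIdeal A
  he3Z : e3 Z - (-((1/2 : ℝ) • (κ' * Z))) ∈ smallIdeal A
  he4Z : e4 Z - (-((1/2 : ℝ) • (κ * Z))) ∈ smallIdeal A
  heθZ : eθ Z - (ρ + (1/4 : ℝ) • (κ * κ') - ρF ^ 2 - Z ^ 2) ∈ smallIdeal A
  heθκ : eθ κ ∈ smallIdeal A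
  heθκ' : eθ κ' ∈ smallIdeal A
  heθω : eθ ω ∈ smallIdeal A
  heθω' : eθ ω' ∈ smallIdeal A
  heθρ : eθ ρ ∈ smallIdeal A
  heθρF : eθ ρF ∈ smallIdeal A
  heθr : eθ r ∈ smallIdeal A
  commθ3 : ∀ x ∈ smallIdeal A, eθ (e3 x) - e3 (eθ x) = (1/2 : ℝ) • (κ' * eθ x)
  commθ4 : ∀ x ∈ smallIdeal A, eθ (e4 x) - e4 (eθ x) = (1/2 : ℝ) • (κ * eθ x)
  comm34 : ∀ x ∈ smallIdeal A, e3 (e4 x) - e4 (e3 x) = 2 * ω' * e4 x - 2 * ω * e3 x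

namespace RNSetting

variable {A : Type*} [CommRing A] [Algebra ℝ A]

/-- The wave operator
`□u = −e4(e3 u) + eθ(eθ u) − (1/2)κ̄·e4(u) + (−(1/2)κ + 2ω)·e3(u) + Z·eθ(u)`. -/
def box (S : RNSetting A) (u : DualNumber A) : DualNumber A :=
  -S.e4 (S.e3 u) + S.eθ (S.eθ u) - (1/2 : ℝ) • (S.κ' * S.e4 u)
    + (-((1/2 : ℝ) • S.κ) + 2 * S.ω) * S.e3 u + S.Z * S.eθ u

/-- The operator `P̄(u) = r·κ̄⁻¹·e3(u) + (1/2)·r·u`. -/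
def Pb (S : RNSetting A) (u : DualNumber A) : DualNumber A :=
  S.r * S.iκ' * S.e3 u + (1/2 : ℝ) • (S.r * u)

/-- The operator `Q(u) = r·κ̄·e4(u) + (1/2)·r·κ·κ̄·u`. -/
def Qop (S : RNSetting A) (u : DualNumber A) : DualNumber A :=
  S.r * S.κ' * S.e4 u + (1/2 : ℝ) • (S.r * S.κ * S.κ' * u)




set_option maxHeartbeats 4000000
set_option linter.unusedSectionVars false

lemma smul0 {x y : DualNumber A} (hx : x ∈ smallIdeal A) (hy : y ∈ smallIdeal A) :
    x * y = 0 := by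
  rw [smallIdeal, Ideal.mem_span_singleton] at hx hy
  obtain ⟨a, rfl⟩ := hx; obtain ⟨b, rfl⟩ := hy
  rw [mul_mul_mul_comm, DualNumber.eps_mul_eps, zero_mul]

lemma mem_of_eps_mul_eq_zero {z : DualNumber A} (h : DualNumber.eps * z = 0) :
    z ∈ smallIdeal A := by
  rw [smallIdeal, Ideal.mem_span_singleton]
  refine ⟨TrivSqZeroExt.inl z.snd, ?_⟩
  have h1 : z.fst = 0 := by
    have h2 := congrArg TrivSqZeroExt.snd h
    simpa using h2
  refine TrivSqZeroExt.ext ?_ ?_ <;> simp [h1]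

@[simp]
lemma dnum (D : Derivation ℝ (DualNumber A) (DualNumber A)) (n : ℕ) [n.AtLeastTwo] :
    D (no_index (OfNat.ofNat n)) = 0 := by
  rw [← map_ofNat (algebraMap ℝ (DualNumber A)) n, Derivation.map_algebraMap]

/-- wave equation for `Φ1 = P̄(Φ0)`. -/
theorem box_Phi1 (S : RNSetting A) (α frakf : DualNumber A)
    (hα : α ∈ smallIdeal A) (hfrakf : frakf ∈ smallIdeal A)
    (Φ0 Φ1 Φ2 Φ3 Φ4 : DualNumber A)
    (hΦ0 : Φ0 = S.r ^ 2 * S.κ' ^ 2 * α) (hΦ1 : Φ1 = S.Pb Φ0) (hΦ2 : Φ2 = S.Pb Φ1)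
    (hΦ3 : Φ3 = S.r ^ 2 * S.κ' * frakf) (hΦ4 : Φ4 = S.Pb Φ3)
    (hbox0 : S.box Φ0
      = S.ir * (2 * (S.κ * S.κ') - 4 * S.ρ) * Φ1
        + (-((1/2 : ℝ) • (S.κ * S.κ')) - 4 * S.ρ + 4 * S.ρF ^ 2 + 4 * S.Z ^ 2) * Φ0
        + S.ρF * (2 * S.ir * S.Qop Φ3 - 4 * S.ρ * Φ3)) :
    S.box Φ1
      = S.ir * (S.κ * S.κ' - 2 * S.ρ) * Φ2
        + (-(S.κ * S.κ') + 6 * S.ρF ^ 2 + 4 * S.Z ^ 2) * Φ1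
        + ((3/2 : ℝ) • S.ρ + S.ρF ^ 2) * (S.r * Φ0)
        + S.ρF * (2 * S.ir * S.Qop Φ4 - S.Qop Φ3 - 2 * (S.κ * S.κ') * Φ4
            + S.r * (6 * S.ρ + 4 * S.ρF ^ 2) * Φ3) := by
  have H2 : (2 : DualNumber A) * algebraMap ℝ (DualNumber A) (1/2) = 1 := by
    rw [show ((2:DualNumber A)) = algebraMap ℝ (DualNumber A) 2 from by rw [map_ofNat], ← map_mul]
    norm_num
  have H32 : algebraMap ℝ (DualNumber A) (3/2) = 3 * algebraMap ℝ (DualNumber A) (1/2) := by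
    rw [show ((3:DualNumber A)) = algebraMap ℝ (DualNumber A) 3 from by rw [map_ofNat], ← map_mul]
    norm_num
  -- normalized copies of the transport hypotheses
  have nh3r := S.he3r; have nh4r := S.he4r; have nh3kb := S.he3κ'; have nh4kb := S.he4κ'
  have nh3k := S.he3κ; have nh3rho := S.he3ρ; have nh3rF := S.he3ρF; have nh3Z := S.he3Z
  have nhww := S.hωω'
  simp only [Algebra.smul_def] at nh3r nh4r nh3kb nh4kb nh3k nh3rho nh3rF nh3Z nhww
  -- memberships
  have hu : Φ0 ∈ smallIdeal A := by rw [hΦ0]; exact Ideal.mul_mem_left _ _ hα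
  have hv : Φ3 ∈ smallIdeal A := by rw [hΦ3]; exact Ideal.mul_mem_left _ _ hfrakf
  have hu3 := S.pres_e3 _ hu
  have hu4 := S.pres_e4 _ hu
  have hut := S.pres_eθ _ hu
  have hu33 := S.pres_e3 _ hu3
  have hu43 := S.pres_e4 _ hu3
  have hut3 := S.pres_eθ _ hu3
  have hu433 := S.pres_e4 _ hu33
  have hutt := S.pres_eθ _ hut
  have hv3 := S.pres_e3 _ hv
  have hv4 := S.pres_e4 _ hv
  have hv43 := S.pres_e4 _ hv3
  -- inverse derivative identities
  have E3ikb : S.e3 S.iκ' = -(S.iκ' * S.iκ') * S.e3 S.κ' := by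
    have hD : S.e3 (S.κ' * S.iκ') = 0 := by rw [S.hκ', Derivation.map_one_eq_zero]
    rw [Derivation.leibniz, smul_eq_mul, smul_eq_mul] at hD
    linear_combination S.iκ' * hD - S.e3 S.iκ' * S.hκ'
  have E4ikb : S.e4 S.iκ' = -(S.iκ' * S.iκ') * S.e4 S.κ' := by
    have hD : S.e4 (S.κ' * S.iκ') = 0 := by rw [S.hκ', Derivation.map_one_eq_zero]
    rw [Derivation.leibniz, smul_eq_mul, smul_eq_mul] at hD
    linear_combination S.iκ' * hD - S.e4 S.iκ' * S.hκ'
  have Eθikb : S.eθ S.iκ' = -(S.iκ' * S.iκ') * S.eθ S.κ' := by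
    have hD : S.eθ (S.κ' * S.iκ') = 0 := by rw [S.hκ', Derivation.map_one_eq_zero]
    rw [Derivation.leibniz, smul_eq_mul, smul_eq_mul] at hD
    linear_combination S.iκ' * hD - S.eθ S.iκ' * S.hκ'
  have hIotikb : S.eθ S.iκ' ∈ smallIdeal A := by
    rw [Eθikb]; exact Ideal.mul_mem_left _ _ S.heθκ'
  -- commutator instances
  have Fo3ut := S.commθ3 Φ0 hu
  have hC1b := S.commθ3 (S.eθ Φ0) hut
  simp only [Algebra.smul_def] at Fo3ut hC1b
  have Fo3u4 := S.comm34 Φ0 hu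
  have Fo3u43 := S.comm34 (S.e3 Φ0) hu3
  have Fo3v4 := S.comm34 Φ3 hv
  have FC1a : S.eθ (S.eθ (S.e3 Φ0) - S.e3 (S.eθ Φ0))
      = S.eθ (algebraMap ℝ (DualNumber A) (1/2) * (S.κ' * S.eθ Φ0)) := by rw [Fo3ut]
  simp only [map_add, map_sub, map_neg, Derivation.leibniz, smul_eq_mul, Derivation.map_algebraMap, dnum, mul_zero, zero_mul, add_zero, zero_add, neg_zero] at FC1a
  -- the global commutator identity mod I, applied to κ', and ω·ω' ∈ I
  have heps : (DualNumber.eps : DualNumber A) ∈ smallIdeal A :=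
    Ideal.subset_span (Set.mem_singleton _)
  have hc := S.comm34 (DualNumber.eps * S.κ') (Ideal.mul_mem_right _ _ heps)
  have hce := S.comm34 DualNumber.eps heps
  simp only [Derivation.leibniz, smul_eq_mul, map_add] at hc
  have hG0 : DualNumber.eps * (S.e3 (S.e4 S.κ') - S.e4 (S.e3 S.κ')
      - (2 * S.ω' * S.e4 S.κ' - 2 * S.ω * S.e3 S.κ')) = 0 := by
    linear_combination hc - S.κ' * hce
  have hglob := mem_of_eps_mul_eq_zero hG0
  have hmem8 : (8 : DualNumber A) * (S.ω * S.ω') * S.κ' ∈ smallIdeal A := by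
    have e1 : (8 : DualNumber A) * (S.ω * S.ω') * S.κ'
        = -(S.e3 (S.e4 S.κ') - S.e4 (S.e3 S.κ')
              - (2 * S.ω' * S.e4 S.κ' - 2 * S.ω * S.e3 S.κ'))
          + S.e3 (S.e4 S.κ' - (-((1/2 : ℝ) • (S.κ * S.κ')) + 2 * S.ω * S.κ' + 2 * S.ρ))
          - S.e4 (S.e3 S.κ' - (-((1/2 : ℝ) • (S.κ' * S.κ')) - 2 * S.ω' * S.κ'))
          + 2 * S.κ' * (S.e3 S.ω + S.e4 S.ω' - (S.ρ + S.ρF ^ 2))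
          + (-(algebraMap ℝ (DualNumber A) (1/2) * S.κ) + 4 * S.ω)
              * (S.e3 S.κ' - (-((1/2 : ℝ) • (S.κ' * S.κ')) - 2 * S.ω' * S.κ'))
          + 2 * algebraMap ℝ (DualNumber A) (1/2) * S.κ'
              * (S.e4 S.κ' - (-((1/2 : ℝ) • (S.κ * S.κ')) + 2 * S.ω * S.κ' + 2 * S.ρ))
          - algebraMap ℝ (DualNumber A) (1/2) * S.κ'
              * (S.e3 S.κ - (-((1/2 : ℝ) • (S.κ * S.κ')) + 2 * S.ω' * S.κ + 2 * S.ρ))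
          + 2 * (S.e3 S.ρ - (-((3/2 : ℝ) • (S.κ' * S.ρ)) - S.κ' * S.ρF ^ 2)) := by
      simp only [Algebra.smul_def]
      simp only [map_add, map_sub, map_neg, Derivation.leibniz, smul_eq_mul, Derivation.map_algebraMap, dnum, mul_zero, zero_mul, add_zero, zero_add, neg_zero]
      linear_combination ((-2) * S.κ' * S.ρ) * H32 + ((-2) * S.κ' * S.ρ) * H2
    rw [e1]
    exact Ideal.add_mem _ (Ideal.sub_mem _ (Ideal.add_mem _ (Ideal.add_mem _ (Ideal.add_mem _
      (Ideal.sub_mem _ (Ideal.add_mem _ (neg_mem hglob) (S.pres_e3 _ S.he4κ'))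
        (S.pres_e4 _ S.he3κ'))
      (Ideal.mul_mem_left _ _ S.hωω')) (Ideal.mul_mem_left _ _ S.he3κ'))
      (Ideal.mul_mem_left _ _ S.he4κ')) (Ideal.mul_mem_left _ _ S.he3κ))
      (Ideal.mul_mem_left _ _ S.he3ρ)
  have hww : S.ω * S.ω' ∈ smallIdeal A := by
    have e2 : S.ω * S.ω' = algebraMap ℝ (DualNumber A) (1/2) * algebraMap ℝ (DualNumber A) (1/2)
        * algebraMap ℝ (DualNumber A) (1/2) * S.iκ'
        * ((8 : DualNumber A) * (S.ω * S.ω') * S.κ') := by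
      linear_combination ((-8) * algebraMap ℝ (DualNumber A) (1/2) * algebraMap ℝ (DualNumber A) (1/2)
          * algebraMap ℝ (DualNumber A) (1/2) * (S.ω * S.ω')) * S.hκ'
        + (-(4 * algebraMap ℝ (DualNumber A) (1/2) * algebraMap ℝ (DualNumber A) (1/2)
            + 2 * algebraMap ℝ (DualNumber A) (1/2) + 1) * (S.ω * S.ω')) * H2
    rw [e2]; exact Ideal.mul_mem_left _ _ hmem8
  have hΦ1e : Φ1 = (algebraMap ℝ (DualNumber A) (1/2)) * S.r * Φ0 + S.iκ' * S.r * (S.e3 Φ0) := by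
    rw [hΦ1, RNSetting.Pb, Algebra.smul_def]; ring1
  have hPH1 : Φ1 ∈ smallIdeal A := by
    rw [hΦ1e]
    exact Ideal.add_mem _ (Ideal.mul_mem_left _ _ hu) (Ideal.mul_mem_left _ _ hu3)
  have hΦ4e : Φ4 = (algebraMap ℝ (DualNumber A) (1/2)) * S.r * Φ3 + S.iκ' * S.r * (S.e3 Φ3) := by
    rw [hΦ4, RNSetting.Pb, Algebra.smul_def]; ring1
  have hPH4 : Φ4 ∈ smallIdeal A := by
    rw [hΦ4e]
    exact Ideal.add_mem _ (Ideal.mul_mem_left _ _ hv) (Ideal.mul_mem_left _ _ hv3)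
  have hΦ2e : Φ2 = S.r * S.iκ' * S.e3 Φ1 + algebraMap ℝ (DualNumber A) (1/2) * (S.r * Φ1) := by
    rw [hΦ2, RNSetting.Pb, Algebra.smul_def]
  have hbox0' := hbox0
  simp only [RNSetting.box, RNSetting.Qop, Algebra.smul_def] at hbox0'
  have A1 : S.e3 Φ1 = (3) * (algebraMap ℝ (DualNumber A) (1/2)) * S.r * (S.e3 Φ0) + (algebraMap ℝ (DualNumber A) (1/2)) * (algebraMap ℝ (DualNumber A) (1/2)) * S.κ' * S.r * Φ0 + (2) * S.iκ' * S.r * (S.e3 Φ0) * S.ω' + S.iκ' * S.r * (S.e3 (S.e3 Φ0)) := by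
    have hstep : S.e3 Φ1 = S.e3 ((algebraMap ℝ (DualNumber A) (1/2)) * S.r * Φ0 + S.iκ' * S.r * (S.e3 Φ0)) := by rw [hΦ1e]
    simp only [map_add, map_sub, map_neg, Derivation.leibniz, smul_eq_mul, Derivation.map_algebraMap, dnum, mul_zero, zero_mul, add_zero, zero_add, neg_zero] at hstep
    linear_combination hstep +
          (S.r * (S.e3 Φ0)) * E3ikb +
          (S.iκ') * (smul0 nh3r hu3) +
          ((algebraMap ℝ (DualNumber A) (1/2))) * (smul0 nh3r hu) +
          (-S.iκ' * S.iκ' * S.r) * (smul0 nh3kb hu3) +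
          ((algebraMap ℝ (DualNumber A) (1/2)) * S.iκ' * S.κ' * S.r * (S.e3 Φ0) + (2) * (algebraMap ℝ (DualNumber A) (1/2)) * S.r * (S.e3 Φ0) + (2) * S.iκ' * S.r * (S.e3 Φ0) * S.ω') * S.hκ'
  have A2 : S.e4 Φ1 = (algebraMap ℝ (DualNumber A) (1/2)) * S.r * (S.e4 Φ0) + (algebraMap ℝ (DualNumber A) (1/2)) * (algebraMap ℝ (DualNumber A) (1/2)) * S.κ * S.r * Φ0 + S.iκ' * S.κ * S.r * (S.e3 Φ0) + (-2) * S.iκ' * S.r * (S.e3 Φ0) * S.ω + S.iκ' * S.r * (S.e4 (S.e3 Φ0)) + (-2) * S.iκ' * S.iκ' * S.r * S.ρ * (S.e3 Φ0) := by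
    have hstep : S.e4 Φ1 = S.e4 ((algebraMap ℝ (DualNumber A) (1/2)) * S.r * Φ0 + S.iκ' * S.r * (S.e3 Φ0)) := by rw [hΦ1e]
    simp only [map_add, map_sub, map_neg, Derivation.leibniz, smul_eq_mul, Derivation.map_algebraMap, dnum, mul_zero, zero_mul, add_zero, zero_add, neg_zero] at hstep
    linear_combination hstep +
          (S.r * (S.e3 Φ0)) * E4ikb +
          (S.iκ') * (smul0 nh4r hu3) +
          ((algebraMap ℝ (DualNumber A) (1/2))) * (smul0 nh4r hu) +
          (-S.iκ' * S.iκ' * S.r) * (smul0 nh4kb hu3) +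
          ((algebraMap ℝ (DualNumber A) (1/2)) * S.iκ' * S.κ * S.r * (S.e3 Φ0) + (-2) * S.iκ' * S.r * (S.e3 Φ0) * S.ω) * S.hκ' +
          (S.iκ' * S.κ * S.r * (S.e3 Φ0)) * H2
  have A3 : S.e4 (S.e3 Φ1) = (algebraMap ℝ (DualNumber A) (1/2)) * S.κ' * S.r * Φ0 * S.ω + (algebraMap ℝ (DualNumber A) (1/2)) * S.r * S.ρ * Φ0 + (3) * (algebraMap ℝ (DualNumber A) (1/2)) * S.r * (S.e4 (S.e3 Φ0)) + (3) * (algebraMap ℝ (DualNumber A) (1/2)) * (algebraMap ℝ (DualNumber A) (1/2)) * S.κ * S.r * (S.e3 Φ0) + (algebraMap ℝ (DualNumber A) (1/2)) * (algebraMap ℝ (DualNumber A) (1/2)) * S.κ' * S.r * (S.e4 Φ0) + (2) * S.iκ' * S.κ * S.r * (S.e3 Φ0) * S.ω' + S.iκ' * S.κ * S.r * (S.e3 (S.e3 Φ0)) + (2) * S.iκ' * S.r * S.ρF * S.ρF * (S.e3 Φ0) + (2) * S.iκ' * S.r * S.ρ * (S.e3 Φ0) + (-2) * S.iκ' * S.r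 * (S.e3 S.ω) * (S.e3 Φ0) + (-2) * S.iκ' * S.r * (S.e3 (S.e3 Φ0)) * S.ω + (2) * S.iκ' * S.r * (S.e4 (S.e3 Φ0)) * S.ω' + S.iκ' * S.r * (S.e4 (S.e3 (S.e3 Φ0))) + (-4) * S.iκ' * S.iκ' * S.r * S.ρ * (S.e3 Φ0) * S.ω' + (-2) * S.iκ' * S.iκ' * S.r * S.ρ * (S.e3 (S.e3 Φ0)) := by
    have hstep : S.e4 (S.e3 Φ1) = S.e4 ((3) * (algebraMap ℝ (DualNumber A) (1/2)) * S.r * (S.e3 Φ0) + (algebraMap ℝ (DualNumber A) (1/2)) * (algebraMap ℝ (DualNumber A) (1/2)) * S.κ' * S.r * Φ0 + (2) * S.iκ' * S.r * (S.e3 Φ0) * S.ω' + S.iκ' * S.r * (S.e3 (S.e3 Φ0))) := by rw [A1]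
    simp only [map_add, map_sub, map_neg, Derivation.leibniz, smul_eq_mul, Derivation.map_algebraMap, dnum, mul_zero, zero_mul, add_zero, zero_add, neg_zero] at hstep
    linear_combination hstep +
          ((2) * S.r * (S.e3 Φ0) * S.ω' + S.r * (S.e3 (S.e3 Φ0))) * E4ikb +
          ((3) * (algebraMap ℝ (DualNumber A) (1/2)) + (2) * S.iκ' * S.ω') * (smul0 nh4r hu3) +
          ((algebraMap ℝ (DualNumber A) (1/2)) * (algebraMap ℝ (DualNumber A) (1/2)) * S.κ') * (smul0 nh4r hu) +
          (S.iκ') * (smul0 nh4r hu33) +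
          ((algebraMap ℝ (DualNumber A) (1/2)) * (algebraMap ℝ (DualNumber A) (1/2)) * S.r) * (smul0 nh4kb hu) +
          ((-2) * S.iκ' * S.iκ' * S.r * S.ω') * (smul0 nh4kb hu3) +
          (-S.iκ' * S.iκ' * S.r) * (smul0 nh4kb hu33) +
          ((2) * S.iκ' * S.r) * (smul0 nhww hu3) +
          ((-4) * S.iκ' * S.iκ' * S.κ' * S.r) * (smul0 hww hu3) +
          ((2) * (algebraMap ℝ (DualNumber A) (1/2)) * S.iκ' * S.κ * S.r * (S.e3 Φ0) * S.ω' + (algebraMap ℝ (DualNumber A) (1/2)) * S.iκ' * S.κ * S.r * (S.e3 (S.e3 Φ0)) + (-2) * S.iκ' * S.r * (S.e3 (S.e3 Φ0)) * S.ω) * S.hκ' +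
          ((algebraMap ℝ (DualNumber A) (1/2)) * S.κ' * S.r * Φ0 * S.ω + (algebraMap ℝ (DualNumber A) (1/2)) * S.r * S.ρ * Φ0 + (2) * S.iκ' * S.κ * S.r * (S.e3 Φ0) * S.ω' + S.iκ' * S.κ * S.r * (S.e3 (S.e3 Φ0))) * H2
  have A4 : S.eθ Φ1 = (algebraMap ℝ (DualNumber A) (1/2)) * S.r * (S.eθ Φ0) + S.iκ' * S.r * (S.eθ (S.e3 Φ0)) := by
    have hstep : S.eθ Φ1 = S.eθ ((algebraMap ℝ (DualNumber A) (1/2)) * S.r * Φ0 + S.iκ' * S.r * (S.e3 Φ0)) := by rw [hΦ1e]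
    simp only [map_add, map_sub, map_neg, Derivation.leibniz, smul_eq_mul, Derivation.map_algebraMap, dnum, mul_zero, zero_mul, add_zero, zero_add, neg_zero] at hstep
    linear_combination hstep +
          (S.iκ') * (smul0 S.heθr hu3) +
          ((algebraMap ℝ (DualNumber A) (1/2))) * (smul0 S.heθr hu) +
          (S.r) * (smul0 hIotikb hu3)
  have A5 : S.eθ (S.eθ Φ0) = -S.Z * (S.eθ Φ0) + (4) * S.Z * S.Z * Φ0 + (algebraMap ℝ (DualNumber A) (1/2)) * S.κ * S.κ' * Φ0 + (5) * (algebraMap ℝ (DualNumber A) (1/2)) * S.κ * (S.e3 Φ0) + (algebraMap ℝ (DualNumber A) (1/2)) * S.κ' * (S.e4 Φ0) + (-4) * S.iκ' * S.ρ * (S.e3 Φ0) + S.κ * S.κ' * S.ρF * Φ3 + (2) * S.κ' * S.ρF * (S.e4 Φ3) + (-4) * S.ρF * S.ρ * Φ3 + (4) * S.ρF * S.ρF * Φ0 + (-6) * S.ρ * Φ0 + (-2) * (S.e3 Φ0) * S.ω + (S.e4 (S.e3 Φ0)) := by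
    linear_combination hbox0' +
          ((2) * S.ir * S.κ * S.κ' + (-4) * S.ir * S.ρ) * hΦ1e +
          ((2) * (algebraMap ℝ (DualNumber A) (1/2)) * S.κ * S.κ' * S.ρF * Φ3 + (2) * (algebraMap ℝ (DualNumber A) (1/2)) * S.κ * S.κ' * Φ0 + (-4) * (algebraMap ℝ (DualNumber A) (1/2)) * S.ρ * Φ0 + (2) * S.iκ' * S.κ * S.κ' * (S.e3 Φ0) + (-4) * S.iκ' * S.ρ * (S.e3 Φ0) + (2) * S.κ' * S.ρF * (S.e4 Φ3)) * S.hr +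
          ((2) * S.κ * (S.e3 Φ0)) * S.hκ' +
          (S.κ * S.κ' * S.ρF * Φ3 + (-2) * S.κ * (S.e3 Φ0) + (-2) * S.ρ * Φ0) * H2
  have A6 : S.e3 (S.eθ (S.eθ Φ0)) = S.Z * S.κ' * (S.eθ Φ0) - S.Z * (S.eθ (S.e3 Φ0)) + (-4) * S.Z * S.Z * S.κ' * Φ0 + (4) * S.Z * S.Z * (S.e3 Φ0) - (algebraMap ℝ (DualNumber A) (1/2)) * S.κ * S.κ' * S.κ' * Φ0 + (5) * (algebraMap ℝ (DualNumber A) (1/2)) * S.κ * (S.e3 (S.e3 Φ0)) + (algebraMap ℝ (DualNumber A) (1/2)) * S.κ' * (S.e4 (S.e3 Φ0)) + (-3) * (algebraMap ℝ (DualNumber A) (1/2)) * (algebraMap ℝ (DualNumber A) (1/2)) * S.κ * S.κ' * (S.e3 Φ0) - (algebraMap ℝ (DualNumber A) (1/2)) * (algebraMap ℝ (DualNumber A) (1/2)) * S.κ' * S.κ' * (S.e4 Φ0) + (-8) * S.iκ' * S.ρ * (S.e3 Φ0) * S.ω' + (-4) * S.iκ' * S.ρ * (S.e3 (S.e3 Φ0))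 + S.κ * S.κ' * S.ρF * (S.e3 Φ3) + (-2) * S.κ * S.κ' * S.κ' * S.ρF * Φ3 + (5) * S.κ * (S.e3 Φ0) * S.ω' + (12) * S.κ' * S.ρF * S.ρ * Φ3 + (-4) * S.κ' * S.ρF * (S.e3 Φ3) * S.ω + (2) * S.κ' * S.ρF * (S.e4 (S.e3 Φ3)) + (-2) * S.κ' * S.ρF * S.ρF * Φ0 + (4) * S.κ' * S.ρF * S.ρF * S.ρF * Φ3 + (10) * S.κ' * S.ρ * Φ0 - S.κ' * (S.e3 Φ0) * S.ω + (-3) * S.κ' * S.κ' * S.ρF * (S.e4 Φ3) + (-4) * S.ρF * S.ρ * (S.e3 Φ3) + (8) * S.ρF * S.ρF * (S.e3 Φ0) + (3) * S.ρ * (S.e3 Φ0) + (-2) * (S.e3 S.ω) * (S.e3 Φ0) + (-4) * (S.e3 (S.e3 Φ0)) * S.ω + (2) * (S.e4 (S.e3 Φ0)) * S.ω' + (S.e4 (S.e3 (S.e3 Φ0))) := by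
    have hstep : S.e3 (S.eθ (S.eθ Φ0)) = S.e3 (-S.Z * (S.eθ Φ0) + (4) * S.Z * S.Z * Φ0 + (algebraMap ℝ (DualNumber A) (1/2)) * S.κ * S.κ' * Φ0 + (5) * (algebraMap ℝ (DualNumber A) (1/2)) * S.κ * (S.e3 Φ0) + (algebraMap ℝ (DualNumber A) (1/2)) * S.κ' * (S.e4 Φ0) + (-4) * S.iκ' * S.ρ * (S.e3 Φ0) + S.κ * S.κ' * S.ρF * Φ3 + (2) * S.κ' * S.ρF * (S.e4 Φ3) + (-4) * S.ρF * S.ρ * Φ3 + (4) * S.ρF * S.ρF * Φ0 + (-6) * S.ρ * Φ0 + (-2) * (S.e3 Φ0) * S.ω + (S.e4 (S.e3 Φ0))) := by rw [A5]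
    simp only [map_add, map_sub, map_neg, Derivation.leibniz, smul_eq_mul, Derivation.map_algebraMap, dnum, mul_zero, zero_mul, add_zero, zero_add, neg_zero] at hstep
    linear_combination hstep +
          (S.Z) * Fo3ut +
          ((algebraMap ℝ (DualNumber A) (1/2)) * S.κ') * Fo3u4 +
          Fo3u43 +
          ((2) * S.κ' * S.ρF) * Fo3v4 +
          ((-4) * S.ρ * (S.e3 Φ0)) * E3ikb +
          ((algebraMap ℝ (DualNumber A) (1/2)) * S.κ) * (smul0 nh3kb hu) +
          ((2) * S.ρF) * (smul0 nh3kb hv4) +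
          (S.κ * S.ρF) * (smul0 nh3kb hv) +
          ((algebraMap ℝ (DualNumber A) (1/2))) * (smul0 nh3kb hu4) +
          ((4) * S.iκ' * S.iκ' * S.ρ) * (smul0 nh3kb hu3) +
          ((5) * (algebraMap ℝ (DualNumber A) (1/2))) * (smul0 nh3k hu3) +
          ((algebraMap ℝ (DualNumber A) (1/2)) * S.κ') * (smul0 nh3k hu) +
          (S.κ' * S.ρF) * (smul0 nh3k hv) +
          ((-4) * S.iκ') * (smul0 nh3rho hu3) +
          ((-6)) * (smul0 nh3rho hu) +
          ((-4) * S.ρF) * (smul0 nh3rho hv) +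
          ((8) * S.ρF) * (smul0 nh3rF hu) +
          ((2) * S.κ') * (smul0 nh3rF hv4) +
          (S.κ * S.κ' + (-4) * S.ρ) * (smul0 nh3rF hv) +
          ((8) * S.Z) * (smul0 nh3Z hu) +
          ((-1)) * (smul0 nh3Z hut) +
          ((4) * S.iκ' * S.κ' * S.ρ * (S.e3 Φ0) + (4) * S.κ' * S.ρF * S.ρ * Φ3 + (6) * S.κ' * S.ρ * Φ0) * H32 +
          ((-4) * (algebraMap ℝ (DualNumber A) (1/2)) * S.iκ' * S.κ' * S.ρ * (S.e3 Φ0) + (8) * (algebraMap ℝ (DualNumber A) (1/2)) * S.ρ * (S.e3 Φ0) + (-8) * S.iκ' * S.ρ * (S.e3 Φ0) * S.ω' + (4) * S.ρF * S.ρF * (S.e3 Φ0)) * S.hκ' +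
          (S.Z * S.κ' * (S.eθ Φ0) + (-4) * S.Z * S.Z * S.κ' * Φ0 - (algebraMap ℝ (DualNumber A) (1/2)) * S.κ * S.κ' * (S.e3 Φ0) - (algebraMap ℝ (DualNumber A) (1/2)) * S.κ * S.κ' * S.κ' * Φ0 - S.κ * S.κ' * S.κ' * S.ρF * Φ3 + (5) * S.κ * (S.e3 Φ0) * S.ω' + (6) * S.κ' * S.ρF * S.ρ * Φ3 + (10) * S.κ' * S.ρ * Φ0 - S.κ' * (S.e3 Φ0) * S.ω - S.κ' * S.κ' * S.ρF * (S.e4 Φ3) + (9) * S.ρ * (S.e3 Φ0)) * H2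
  have C1 : S.eθ (S.eθ (S.e3 Φ0)) = S.e3 (S.eθ (S.eθ Φ0)) + S.κ' * S.eθ (S.eθ Φ0) := by
    linear_combination FC1a +
          hC1b +
          ((algebraMap ℝ (DualNumber A) (1/2))) * (smul0 S.heθκ' hut) +
          (S.κ' * (S.eθ (S.eθ Φ0))) * H2
  have A7 : S.eθ (S.eθ Φ1) = -S.Z * (algebraMap ℝ (DualNumber A) (1/2)) * S.r * (S.eθ Φ0) - S.Z * S.iκ' * S.r * (S.eθ (S.e3 Φ0)) + (4) * S.Z * S.Z * S.iκ' * S.r * (S.e3 Φ0) + (2) * S.Z * S.Z * S.r * Φ0 + (5) * (algebraMap ℝ (DualNumber A) (1/2)) * S.iκ' * S.κ * S.r * (S.e3 (S.e3 Φ0)) - (algebraMap ℝ (DualNumber A) (1/2)) * S.κ * S.κ' * S.r * S.ρF * Φ3 + (algebraMap ℝ (DualNumber A) (1/2)) * S.κ' * S.r * (S.e4 Φ0) + (algebraMap ℝ (DualNumber A) (1/2)) * (algebraMap ℝ (DualNumber A) (1/2)) * S.κ * S.κ' * S.r * Φ0 + (5) * S.iκ' * S.κ * S.r * (S.e3 Φ0)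 * S.ω' + (-4) * S.iκ' * S.r * S.ρF * S.ρ * (S.e3 Φ3) + (8) * S.iκ' * S.r * S.ρF * S.ρF * (S.e3 Φ0) + (-3) * S.iκ' * S.r * S.ρ * (S.e3 Φ0) + (-2) * S.iκ' * S.r * (S.e3 S.ω) * (S.e3 Φ0) + (-4) * S.iκ' * S.r * (S.e3 (S.e3 Φ0)) * S.ω + (2) * S.iκ' * S.r * (S.e4 (S.e3 Φ0)) * S.ω' + S.iκ' * S.r * (S.e4 (S.e3 (S.e3 Φ0))) + (-8) * S.iκ' * S.iκ' * S.r * S.ρ * (S.e3 Φ0) * S.ω' + (-4) * S.iκ' * S.iκ' * S.r * S.ρ * (S.e3 (S.e3 Φ0)) + S.κ * S.r * S.ρF * (S.e3 Φ3) + (3) * S.κ * S.r * (S.e3 Φ0) + (6) * S.r * S.ρF * S.ρ * Φ3 + (-4) * S.r * S.ρF * (S.e3 Φ3) * S.ω + (2) * S.r * S.ρF * (S.e4 (S.e3 Φ3)) + (4) * S.r * S.ρF * S.ρF * Φ0 + (4) * S.r * S.ρF * S.ρF * S.ρF * Φ3 + S.r * S.ρ * Φ0 + (-4) * S.r * (S.e3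 Φ0) * S.ω + (2) * S.r * (S.e4 (S.e3 Φ0)) := by
    have hstep : S.eθ (S.eθ Φ1) = S.eθ ((algebraMap ℝ (DualNumber A) (1/2)) * S.r * (S.eθ Φ0) + S.iκ' * S.r * (S.eθ (S.e3 Φ0))) := by rw [A4]
    simp only [map_add, map_sub, map_neg, Derivation.leibniz, smul_eq_mul, Derivation.map_algebraMap, dnum, mul_zero, zero_mul, add_zero, zero_add, neg_zero] at hstep
    linear_combination hstep +
          (S.iκ' * S.r) * C1 +
          (S.iκ' * S.r) * A6 +
          ((algebraMap ℝ (DualNumber A) (1/2)) * S.r + S.iκ' * S.κ' * S.r) * A5 +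
          (S.iκ') * (smul0 S.heθr hut3) +
          ((algebraMap ℝ (DualNumber A) (1/2))) * (smul0 S.heθr hut) +
          (S.r) * (smul0 hIotikb hut3) +
          ((5) * (algebraMap ℝ (DualNumber A) (1/2)) * S.κ * S.r * (S.e3 Φ0) + (algebraMap ℝ (DualNumber A) (1/2)) * S.κ' * S.r * (S.e4 Φ0) + (algebraMap ℝ (DualNumber A) (1/2)) * S.r * (S.e4 (S.e3 Φ0)) + (-3) * (algebraMap ℝ (DualNumber A) (1/2)) * (algebraMap ℝ (DualNumber A) (1/2)) * S.κ * S.r * (S.e3 Φ0) - (algebraMap ℝ (DualNumber A) (1/2)) * (algebraMap ℝ (DualNumber A) (1/2)) * S.κ' * S.r * (S.e4 Φ0) + (-4) * S.iκ' * S.r * S.ρ * (S.e3 Φ0) - S.κ * S.κ' * S.r * S.ρF * Φ3 + S.κ * S.r * S.ρF * (S.e3 Φ3) - S.κ' * S.r * S.ρF * (S.e4 Φ3) + (8) * S.r * S.ρF * S.ρ * Φ3 + (-4) * S.r * S.ρF * (S.e3 Φ3) * S.ω + (2) * S.r * S.ρF * (S.e4 (S.e3 Φ3)) + (2) * S.r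 * S.ρF * S.ρF * Φ0 + (4) * S.r * S.ρF * S.ρF * S.ρF * Φ3 + (4) * S.r * S.ρ * Φ0 + (-3) * S.r * (S.e3 Φ0) * S.ω + S.r * (S.e4 (S.e3 Φ0))) * S.hκ' +
          ((2) * S.Z * S.Z * S.r * Φ0 + (algebraMap ℝ (DualNumber A) (1/2)) * S.κ * S.r * (S.e3 Φ0) + (-2) * S.iκ' * S.r * S.ρ * (S.e3 Φ0) + S.κ * S.κ' * S.r * S.ρF * Φ3 + (3) * S.κ * S.r * (S.e3 Φ0) + S.κ' * S.r * S.ρF * (S.e4 Φ3) + (-2) * S.r * S.ρF * S.ρ * Φ3 + (2) * S.r * S.ρF * S.ρF * Φ0 + (-3) * S.r * S.ρ * Φ0 - S.r * (S.e3 Φ0) * S.ω + S.r * (S.e4 (S.e3 Φ0))) * H2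
  have A9 : S.e4 Φ4 = (algebraMap ℝ (DualNumber A) (1/2)) * S.r * (S.e4 Φ3) + (algebraMap ℝ (DualNumber A) (1/2)) * (algebraMap ℝ (DualNumber A) (1/2)) * S.κ * S.r * Φ3 + S.iκ' * S.κ * S.r * (S.e3 Φ3) + (-2) * S.iκ' * S.r * (S.e3 Φ3) * S.ω + S.iκ' * S.r * (S.e4 (S.e3 Φ3)) + (-2) * S.iκ' * S.iκ' * S.r * S.ρ * (S.e3 Φ3) := by
    have hstep : S.e4 Φ4 = S.e4 ((algebraMap ℝ (DualNumber A) (1/2)) * S.r * Φ3 + S.iκ' * S.r * (S.e3 Φ3)) := by rw [hΦ4e]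
    simp only [map_add, map_sub, map_neg, Derivation.leibniz, smul_eq_mul, Derivation.map_algebraMap, dnum, mul_zero, zero_mul, add_zero, zero_add, neg_zero] at hstep
    linear_combination hstep +
          (S.r * (S.e3 Φ3)) * E4ikb +
          (S.iκ') * (smul0 nh4r hv3) +
          ((algebraMap ℝ (DualNumber A) (1/2))) * (smul0 nh4r hv) +
          (-S.iκ' * S.iκ' * S.r) * (smul0 nh4kb hv3) +
          ((algebraMap ℝ (DualNumber A) (1/2)) * S.iκ' * S.κ * S.r * (S.e3 Φ3) + (-2) * S.iκ' * S.r * (S.e3 Φ3) * S.ω) * S.hκ' +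
          (S.iκ' * S.κ * S.r * (S.e3 Φ3)) * H2
  simp only [RNSetting.box, RNSetting.Qop, Algebra.smul_def]
  linear_combination ((-1)) * A3 +
        A7 +
        (-(algebraMap ℝ (DualNumber A) (1/2)) * S.κ') * A2 +
        (-(algebraMap ℝ (DualNumber A) (1/2)) * S.κ - S.iκ' * S.ir * S.κ * S.κ' * S.r + (2) * S.iκ' * S.ir * S.r * S.ρ + (2) * S.ω) * A1 +
        (S.Z) * A4 +
        (-S.ir * S.κ * S.κ' + (2) * S.ir * S.ρ) * hΦ2e +
        ((-4) * S.Z * S.Z - (algebraMap ℝ (DualNumber A) (1/2)) * S.ir * S.κ * S.κ' * S.r + (2) * (algebraMap ℝ (DualNumber A) (1/2)) * S.ir * S.r * S.ρ + S.κ * S.κ' + (-6) * S.ρF * S.ρF) * hΦ1e +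
        ((-2) * (algebraMap ℝ (DualNumber A) (1/2)) * S.ir * S.κ * S.κ' * S.r * S.ρF + (2) * S.κ * S.κ' * S.ρF) * hΦ4e +
        ((-2) * S.ir * S.κ' * S.r * S.ρF) * A9 +
        (-S.r * S.ρ * Φ0) * H32 +
        ((4) * S.iκ' * S.r) * (smul0 hww hu3) +
        ((-2) * (algebraMap ℝ (DualNumber A) (1/2)) * S.iκ' * S.κ * S.κ' * S.r * S.ρF * (S.e3 Φ3) + (-4) * (algebraMap ℝ (DualNumber A) (1/2)) * S.iκ' * S.κ * S.κ' * S.r * (S.e3 Φ0) + (8) * (algebraMap ℝ (DualNumber A) (1/2)) * S.iκ' * S.r * S.ρ * (S.e3 Φ0) + (-2) * (algebraMap ℝ (DualNumber A) (1/2)) * S.κ' * S.r * S.ρF * (S.e4 Φ3) - (algebraMap ℝ (DualNumber A) (1/2)) * (algebraMap ℝ (DualNumber A) (1/2)) * S.iκ' * S.κ * S.κ' * S.κ' * S.r * Φ0 + (2) * (algebraMap ℝ (DualNumber A) (1/2)) * (algebraMap ℝ (DualNumber A) (1/2)) * S.iκ' * S.κ' * S.r * S.ρ * Φ0 + (-4)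 * (algebraMap ℝ (DualNumber A) (1/2)) * (algebraMap ℝ (DualNumber A) (1/2)) * S.κ * S.κ' * S.r * S.ρF * Φ3 - (algebraMap ℝ (DualNumber A) (1/2)) * (algebraMap ℝ (DualNumber A) (1/2)) * S.κ * S.κ' * S.r * Φ0 + (2) * (algebraMap ℝ (DualNumber A) (1/2)) * (algebraMap ℝ (DualNumber A) (1/2)) * S.r * S.ρ * Φ0 + (-2) * S.iκ' * S.κ * S.κ' * S.r * S.ρF * (S.e3 Φ3) + (4) * S.iκ' * S.κ' * S.r * S.ρF * (S.e3 Φ3) * S.ω + (-2) * S.iκ' * S.κ' * S.r * S.ρF * (S.e4 (S.e3 Φ3)) + (-2) * S.iκ' * S.iκ' * S.κ * S.κ' * S.r * (S.e3 Φ0) * S.ω' - S.iκ' * S.iκ' * S.κ * S.κ' * S.r * (S.e3 (S.e3 Φ0)) + (4) * S.iκ' * S.iκ' * S.κ' * S.r * S.ρF * S.ρ * (S.e3 Φ3) + (4) * S.iκ' * S.iκ' * S.r * S.ρ * (S.e3 Φ0) * S.ω' + (2) * S.iκ' * S.iκ' * S.r * S.ρ * (S.e3 (S.e3 Φ0)))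 * S.hr +
        ((2) * (algebraMap ℝ (DualNumber A) (1/2)) * S.iκ' * S.r * S.ρ * (S.e3 Φ0) + (-2) * (algebraMap ℝ (DualNumber A) (1/2)) * S.κ * S.r * S.ρF * (S.e3 Φ3) + (-5) * (algebraMap ℝ (DualNumber A) (1/2)) * S.κ * S.r * (S.e3 Φ0) + (2) * (algebraMap ℝ (DualNumber A) (1/2)) * S.r * (S.e3 Φ0) * S.ω - (algebraMap ℝ (DualNumber A) (1/2)) * S.r * (S.e4 (S.e3 Φ0)) - (algebraMap ℝ (DualNumber A) (1/2)) * (algebraMap ℝ (DualNumber A) (1/2)) * S.κ * S.κ' * S.r * Φ0 + (2) * (algebraMap ℝ (DualNumber A) (1/2)) * (algebraMap ℝ (DualNumber A) (1/2)) * S.r * S.ρ * Φ0 + (-2) * S.iκ' * S.κ * S.r * (S.e3 Φ0) * S.ω' - S.iκ' * S.κ * S.r * (S.e3 (S.e3 Φ0)) + (4) * S.iκ' * S.r * S.ρF * S.ρ * (S.e3 Φ3) + S.κ * S.r * (S.e3 Φ0) + (4) * S.r * S.ρF * (S.e3 Φ3) * S.ω + (-2) * S.r * S.ρF * (S.e4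 (S.e3 Φ3))) * S.hκ' +
        ((-2) * S.Z * S.Z * S.r * Φ0 + (-2) * (algebraMap ℝ (DualNumber A) (1/2)) * S.κ * S.κ' * S.r * S.ρF * Φ3 - (algebraMap ℝ (DualNumber A) (1/2)) * S.κ * S.κ' * S.r * Φ0 + (-3) * (algebraMap ℝ (DualNumber A) (1/2)) * S.κ * S.r * (S.e3 Φ0) + (algebraMap ℝ (DualNumber A) (1/2)) * S.κ' * S.r * Φ0 * S.ω - (algebraMap ℝ (DualNumber A) (1/2)) * S.κ' * S.r * (S.e4 Φ0) + (2) * (algebraMap ℝ (DualNumber A) (1/2)) * S.r * S.ρ * Φ0 - (algebraMap ℝ (DualNumber A) (1/2)) * (algebraMap ℝ (DualNumber A) (1/2)) * S.κ * S.κ' * S.r * Φ0 - S.iκ' * S.κ * S.r * (S.e3 Φ0) * S.ω' + (2) * S.iκ' * S.κ * S.r * (S.e3 (S.e3 Φ0)) + (5) * S.iκ' * S.r * S.ρ * (S.e3 Φ0) - S.κ * S.r * S.ρF * (S.e3 Φ3) + (-4) * S.κ * S.r * (S.e3 Φ0) - S.κ' * S.r * S.ρF * (S.e4 Φ3) + (-3)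 * S.r * S.ρF * S.ρF * Φ0 - S.r * S.ρ * Φ0 + (4) * S.r * (S.e3 Φ0) * S.ω + (-2) * S.r * (S.e4 (S.e3 Φ0))) * H2

end RNSetting
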